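/- Let R be a ring and let 𝒞 be an exact class of R-modules. Then 𝒞 contains the module R itself if and only if 𝒞 contains every flat R-module. -/

import Mathlib

universe u

open CategoryTheory CategoryTheory.Limits

/-- A class of `R`-modules is stable under filtered colimits if, for every
filtered diagram of modules all of whose objects belong to the class, the
colimit (i.e. the point of any colimit cocone) again belongs to the class. -/
def StableUnderFilteredColimits (R : Type u) [Ring R] (S : Set (ModuleCat.{u} R)) : Prop :=
  ∀ (J : Type u) (_ : SmallCategory J) (_ : IsFiltered J)
    (F : J ⥤ ModuleCat.{u} R) (c : Cocone F), IsColimit c →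
    (∀ j : J, F.obj j ∈ S) → c.pt ∈ S

/-- The 2/3 axiom: for every short exact sequence `0 → M → N → P → 0`, if two of the
three modules belong to the class, then so does the third. -/
def SatisfiesTwoOfThree (R : Type u) [Ring R] (S : Set (ModuleCat.{u} R)) : Prop :=
  ∀ (M N P : ModuleCat.{u} R) (f : M →ₗ[R] N) (g : N →ₗ[R] P),
    Function.Injective f → Function.Surjective g → Function.Exact f g →
      ((M ∈ S → N ∈ S → P ∈ S) ∧ (M ∈ S → P ∈ S → N ∈ S) ∧ (N ∈ S → P ∈ S → M ∈ S))

/-- A class of `R`-modules is exact if it is stable under filtered colimits and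
satisfies the 2/3 axiom. -/
def IsExactClass (R : Type u) [Ring R] (S : Set (ModuleCat.{u} R)) : Prop :=
  StableUnderFilteredColimits R S ∧ SatisfiesTwoOfThree R S

/-- An `R`-module is regular (in the sense of Vogel) if it belongs to every exact class
containing the module `R` itself (i.e. to the smallest such class). -/
def IsRegularModule (R : Type u) [Ring R] (M : ModuleCat.{u} R) : Prop :=
  ∀ S : Set (ModuleCat.{u} R), IsExactClass R S → ModuleCat.of R R ∈ S → M ∈ S

/-- A ring `R` is regular in the sense of Vogel if every `R`-module is regular,
i.e. every exact class of `R`-modules containing `R` contains all `R`-modules. -/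
def IsVogelRegular (R : Type u) [Ring R] : Prop :=
  ∀ M : ModuleCat.{u} R, IsRegularModule R M

/-- A ring is right regular (in the sense of Vogel) if the opposite ring is regular for
left modules, i.e. the category of right `R`-modules (= left `Rᵐᵒᵖ`-modules) has the
Vogel regularity property. -/
def IsVogelRightRegular (R : Type u) [Ring R] : Prop := IsVogelRegular Rᵐᵒᵖ

/-- A module is flat iff it is a filtered colimit of finitely generated free modules
(Lazard's theorem); we take this characterization as the definition of flatness,
which makes sense over an arbitrary (possibly non-commutative) ring. -/
def IsLazardFlat (R : Type u) [Ring R] (M : Type u) [AddCommGroup M] [Module R M] : Prop :=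
  ∃ (J : Type u) (_ : SmallCategory J) (_ : IsFiltered J)
    (F : J ⥤ ModuleCat.{u} R) (c : Cocone F) (_ : IsColimit c),
    (∀ j : J, ∃ n : ℕ, Nonempty ((F.obj j) ≃ₗ[R] (Fin n → R))) ∧
    Nonempty (c.pt ≃ₗ[R] M)

/-! The 2/3 axiom makes the class closed under isomorphism and extensions, so it contains
`Rⁿ ≅ R × Rⁿ⁻¹` once it contains `R`; stability under filtered colimits then gives every
flat module. Conversely `R` is itself flat, as the colimit of the constant diagram on a point. -/

namespace SatisfiesTwoOfThree

variable {R : Type u} [Ring R] {S : Set (ModuleCat.{u} R)}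

theorem mem_of_subsingleton (hS : SatisfiesTwoOfThree R S) {M : ModuleCat.{u} R} (hM : M ∈ S)
    (N : ModuleCat.{u} R) [Subsingleton N] : N ∈ S :=
  (hS M M N LinearMap.id 0 Function.injective_id (fun _ => ⟨0, Subsingleton.elim _ _⟩)
    (fun y => ⟨fun _ => ⟨y, rfl⟩, fun _ => Subsingleton.elim _ _⟩)).1 hM hM

theorem mem_of_linearEquiv (hS : SatisfiesTwoOfThree R S) {M N : ModuleCat.{u} R} (hM : M ∈ S)
    (e : M ≃ₗ[R] N) : N ∈ S :=
  (hS M N (ModuleCat.of R PUnit) e 0 e.injective (fun _ => ⟨0, rfl⟩)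
    (fun y => ⟨fun _ => ⟨e.symm y, e.apply_symm_apply y⟩, fun _ => rfl⟩)).2.1 hM
    (hS.mem_of_subsingleton hM _)

theorem prod_mem (hS : SatisfiesTwoOfThree R S) {M N : Type u} [AddCommGroup M] [Module R M]
    [AddCommGroup N] [Module R N] (hM : ModuleCat.of R M ∈ S) (hN : ModuleCat.of R N ∈ S) :
    ModuleCat.of R (M × N) ∈ S :=
  (hS (ModuleCat.of R M) (ModuleCat.of R (M × N)) (ModuleCat.of R N) (LinearMap.inl R M N)
    (LinearMap.snd R M N) LinearMap.inl_injective LinearMap.snd_surjective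
    Function.Exact.inl_snd).2.1 hM hN

theorem pi_fin_mem (hS : SatisfiesTwoOfThree R S) (hR : ModuleCat.of R R ∈ S) :
    ∀ n : ℕ, ModuleCat.of R (Fin n → R) ∈ S
  | 0 => hS.mem_of_subsingleton hR _
  | n + 1 => hS.mem_of_linearEquiv (hS.prod_mem hR (hS.pi_fin_mem hR n))
      (Fin.consLinearEquiv R fun _ => R)

end SatisfiesTwoOfThree

theorem isLazardFlat_self (R : Type u) [Ring R] : IsLazardFlat R (ModuleCat.of R R) :=
  ⟨Discrete PUnit, inferInstance, inferInstance, _, _,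
    isColimitConstCocone (Discrete PUnit) (ModuleCat.of R R),
    fun _ => ⟨1, ⟨(LinearEquiv.funUnique (Fin 1) R R).symm⟩⟩, ⟨LinearEquiv.refl R R⟩⟩

theorem IsExactClass.mem_of_isLazardFlat {R : Type u} [Ring R] {S : Set (ModuleCat.{u} R)}
    (hS : IsExactClass R S) (hR : ModuleCat.of R R ∈ S) {M : ModuleCat.{u} R}
    (hM : IsLazardFlat R M) : M ∈ S := by
  obtain ⟨J, hJ, hJf, F, c, hc, hfree, ⟨e⟩⟩ := hM
  refine hS.2.mem_of_linearEquiv (hS.1 J hJ hJf F c hc fun j => ?_) e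
  obtain ⟨n, ⟨ej⟩⟩ := hfree j
  exact hS.2.mem_of_linearEquiv (hS.2.pi_fin_mem hR n) ej.symm

theorem isExactClass_self_mem_iff_flat_subset
    (R : Type u) [Ring R] (S : Set (ModuleCat.{u} R)) (hS : IsExactClass R S) :
    ModuleCat.of R R ∈ S ↔
      ∀ M : ModuleCat.{u} R, IsLazardFlat R M → M ∈ S :=
  ⟨fun hR _ hM => hS.mem_of_isLazardFlat hR hM, fun h => h _ (isLazardFlat_self R)⟩
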